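/- arXiv:1608.00419 — 4 statements merged into one kernel-verified Lean document; each statement's English description precedes it below -/
import Mathlib

section
/- Let X, Y be n×r real matrices and T an r×r real matrix, and set Z = T(Yᵀ X). Then for every integer ℓ ≥ 0, φ_ℓ(X T Yᵀ) = (1/ℓ!)·I_n + X·(φ_{ℓ+1}(Z)·T)·Yᵀ. -/
open Matrix

/-- The matrix φ-functions: `φ_ℓ(M) = Σ_{k=ℓ}^∞ M^{k-ℓ}/k! = Σ_{k=0}^∞ M^k/(k+ℓ)!`. -/
noncomputable def phiM {m : Type*} [Fintype m] [DecidableEq m] (ℓ : ℕ)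
    (M : Matrix m m ℝ) : Matrix m m ℝ :=
  ∑' k : ℕ, ((Nat.factorial (k + ℓ) : ℝ))⁻¹ • M ^ k

/-! Splitting off the constant term gives `φ_ℓ(M) = I/ℓ! + M φ_{ℓ+1}(M)`. For `M = X T Yᵀ`
the push-through identity `A φ(BA) = φ(AB) A`, with `A = T Yᵀ` and `B = X`, turns
`M φ_{ℓ+1}(M)` into `X φ_{ℓ+1}(T Yᵀ X) T Yᵀ`. -/

open scoped Nat

theorem summable_inv_factorial_add_smul_pow {𝔸 : Type*} [NormedRing 𝔸] [NormedAlgebra ℝ 𝔸]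
    [CompleteSpace 𝔸] (ℓ : ℕ) (a : 𝔸) :
    Summable fun k : ℕ => (((k + ℓ)! : ℝ))⁻¹ • a ^ k := by
  refine .of_norm_bounded (NormedSpace.norm_expSeries_summable' (𝕂 := ℝ) a) fun k => ?_
  rw [norm_smul, norm_smul]
  gcongr
  rw [norm_inv, norm_inv, Real.norm_natCast, Real.norm_natCast]
  exact inv_anti₀ (by positivity) (by exact_mod_cast Nat.factorial_le (Nat.le_add_right k ℓ))

namespace Matrix

variable {l m n R : Type*} [Fintype m] [Semiring R]

theorem mul_pow_mul [Fintype l] [DecidableEq l] [DecidableEq m] (A : Matrix l m R)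
    (B : Matrix m l R) (k : ℕ) : A * (B * A) ^ k = (A * B) ^ k * A := by
  induction k with
  | zero => simp
  | succ k ih =>
    rw [pow_succ, ← Matrix.mul_assoc, ih, pow_succ]
    simp only [Matrix.mul_assoc]

variable [TopologicalSpace R] [IsTopologicalSemiring R] [T2Space R] {ι : Type*}

theorem mul_tsum (A : Matrix l m R) {f : ι → Matrix m n R} (hf : Summable f) :
    A * ∑' i, f i = ∑' i, A * f i :=
  ((hf.hasSum.map (addMonoidHomMulLeft A) (continuous_const.matrix_mul continuous_id)).tsum_eq).symm

theorem tsum_mul (A : Matrix m n R) {f : ι → Matrix l m R} (hf : Summable f) :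
    (∑' i, f i) * A = ∑' i, f i * A :=
  ((hf.hasSum.map (addMonoidHomMulRight A) (continuous_id.matrix_mul continuous_const)).tsum_eq).symm

end Matrix

section phiM

variable {m p : Type*} [Fintype m] [DecidableEq m] [Fintype p] [DecidableEq p]

theorem phiM_summable (ℓ : ℕ) (M : Matrix m m ℝ) :
    Summable fun k : ℕ => (((k + ℓ)! : ℝ))⁻¹ • M ^ k := by
  let := Matrix.linftyOpNormedRing (α := ℝ) (n := m)
  let := Matrix.linftyOpNormedAlgebra (R := ℝ) (α := ℝ) (n := m)
  exact summable_inv_factorial_add_smul_pow ℓ M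

theorem phiM_eq_add_mul_phiM_succ (ℓ : ℕ) (M : Matrix m m ℝ) :
    phiM ℓ M = ((ℓ ! : ℝ))⁻¹ • 1 + M * phiM (ℓ + 1) M := by
  rw [phiM, (phiM_summable ℓ M).tsum_eq_zero_add, phiM, Matrix.mul_tsum _ (phiM_summable _ M)]
  congr 1
  · simp
  · refine tsum_congr fun k => ?_
    rw [Matrix.mul_smul, ← pow_succ', add_right_comm, add_assoc]

theorem mul_phiM_mul (ℓ : ℕ) (A : Matrix m p ℝ) (B : Matrix p m ℝ) :
    A * phiM ℓ (B * A) = phiM ℓ (A * B) * A := by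
  rw [phiM, phiM, Matrix.mul_tsum _ (phiM_summable _ _), Matrix.tsum_mul _ (phiM_summable _ _)]
  refine tsum_congr fun k => ?_
  rw [Matrix.mul_smul, Matrix.smul_mul, Matrix.mul_pow_mul]

end phiM

theorem phiM_low_rank {n r : ℕ} (X Y : Matrix (Fin n) (Fin r) ℝ)
    (T : Matrix (Fin r) (Fin r) ℝ) (Z : Matrix (Fin r) (Fin r) ℝ)
    (hZ : Z = T * (Yᵀ * X)) (ℓ : ℕ) :
    phiM ℓ (X * T * Yᵀ) =
      ((Nat.factorial ℓ : ℝ))⁻¹ • (1 : Matrix (Fin n) (Fin n) ℝ) +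
        X * (phiM (ℓ + 1) Z * T) * Yᵀ := by
  rw [phiM_eq_add_mul_phiM_succ, Matrix.mul_assoc X T, Matrix.mul_assoc X,
    mul_phiM_mul (ℓ + 1) (T * Yᵀ) X, hZ]
  simp only [Matrix.mul_assoc]
end

section
/- Suppose the power series f(z) = Σ_{i=0}^∞ α_i z^i converges everywhere (radius of convergence ∞), and let g(z) = Σ_{i=1}^∞ α_i z^{i-1}. Let Ã = X T Yᵀ with X, Y ∈ ℝ^{n×r}, T ∈ ℝ^{r×r}, and Z = T Yᵀ X. Then f(Ã) = α_0·I_n + X·g(Z)·T·Yᵀ. -/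
/-!
Every term of `f (A * B)` beyond the constant one factors through the small matrix `B * A`:
`(A * B) ^ (i + 1) = A * (B * A) ^ i * B`. Summing these identities against the coefficients
`α (i + 1)` gives the claim, once both series are known to converge; by Abel's lemma an
everywhere convergent scalar power series converges absolutely, hence also at every matrix.
-/

open Matrix Filter

theorem summable_norm_mul_pow_of_forall_summable {𝕜 : Type*} [NontriviallyNormedField 𝕜]
    {α : ℕ → 𝕜} (hα : ∀ z : 𝕜, Summable fun i => α i * z ^ i) {r : ℝ} (hr : 0 ≤ r) :
    Summable fun i => ‖α i‖ * r ^ i := by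
  obtain ⟨z, hz⟩ := NormedField.exists_lt_norm 𝕜 r
  have hz0 : 0 < ‖z‖ := hr.trans_lt hz
  obtain ⟨C, hC⟩ := (hα z).tendsto_atTop_zero.norm.bddAbove_range
  have hq : 0 ≤ r / ‖z‖ := by positivity
  refine .of_nonneg_of_le (fun i => by positivity) (fun i => ?_)
    ((summable_geometric_of_lt_one hq ((div_lt_one hz0).2 hz)).mul_left C)
  calc ‖α i‖ * r ^ i = ‖α i * z ^ i‖ * (r / ‖z‖) ^ i := by
        rw [norm_mul, norm_pow, div_pow]
        field_simp
    _ ≤ C * (r / ‖z‖) ^ i := by gcongr; exact hC ⟨i, rfl⟩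

theorem summable_norm_succ_mul_pow {E : Type*} [SeminormedAddCommGroup E] {α : ℕ → E}
    (hα : ∀ r : ℝ, 0 ≤ r → Summable fun i => ‖α i‖ * r ^ i) {r : ℝ} (hr : 0 ≤ r) :
    Summable fun i => ‖α (i + 1)‖ * r ^ i := by
  refine .of_nonneg_of_le (fun i => by positivity) (fun i => ?_)
    ((summable_nat_add_iff 1).2 (hα (r + 1) (by positivity)))
  gcongr ‖α (i + 1)‖ * ?_
  calc r ^ i ≤ (r + 1) ^ i := by gcongr; linarith
    _ ≤ (r + 1) ^ (i + 1) := pow_le_pow_right₀ (by linarith) i.le_succ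

theorem summable_smul_pow_of_summable_norm_mul_pow {𝕜 A : Type*} [NormedField 𝕜] [NormedRing A]
    [NormedAlgebra 𝕜 A] [CompleteSpace A] {α : ℕ → 𝕜} {a : A}
    (h : Summable fun i => ‖α i‖ * ‖a‖ ^ i) : Summable fun i => α i • a ^ i := by
  refine h.of_norm_bounded_eventually_nat (eventually_gt_atTop 0 |>.mono fun i hi => ?_)
  rw [norm_smul]
  exact mul_le_mul_of_nonneg_left (norm_pow_le' a hi) (norm_nonneg _)

namespace Matrix

theorem summable_smul_pow {𝕜 m : Type*} [NontriviallyNormedField 𝕜] [CompleteSpace 𝕜]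
    [Fintype m] [DecidableEq m] {α : ℕ → 𝕜}
    (hα : ∀ r : ℝ, 0 ≤ r → Summable fun i => ‖α i‖ * r ^ i) (M : Matrix m m 𝕜) :
    Summable fun i => α i • M ^ i := by
  -- Completeness is found for the product uniformity, before the operator norm is installed;
  -- the two uniformities agree, but only up to unfolding, which instance search does not do.
  have hcomplete : CompleteSpace (Matrix m m 𝕜) := inferInstance
  let _ := Matrix.linftyOpNormedRing (n := m) (α := 𝕜)
  let _ := Matrix.linftyOpNormedAlgebra (n := m) (α := 𝕜) (R := 𝕜)
  exact @summable_smul_pow_of_summable_norm_mul_pow _ _ _ _ _ hcomplete _ _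
    (hα _ (norm_nonneg M))

theorem mul_pow_succ {R m k : Type*} [Semiring R] [Fintype m] [Fintype k] [DecidableEq m]
    [DecidableEq k] (A : Matrix m k R) (B : Matrix k m R) (n : ℕ) :
    (A * B) ^ (n + 1) = A * (B * A) ^ n * B := by
  induction n with
  | zero => simp
  | succ n ih => rw [pow_succ, ih, pow_succ]; simp only [Matrix.mul_assoc]

end Matrix

theorem HasSum.matrix_mul_mul {ι R l m n o : Type*} [TopologicalSpace R]
    [NonUnitalNonAssocSemiring R] [IsTopologicalSemiring R] [Fintype m] [Fintype n]
    {f : ι → Matrix m n R} {S : Matrix m n R} (hf : HasSum f S) (A : Matrix l m R)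
    (B : Matrix n o R) : HasSum (fun i => A * f i * B) (A * S * B) :=
  let L : Matrix m n R →+ Matrix l o R :=
    { toFun M := A * M * B
      map_zero' := by rw [Matrix.mul_zero, Matrix.zero_mul]
      map_add' _ _ := by rw [Matrix.mul_add, Matrix.add_mul] }
  hf.map L ((continuous_const.matrix_mul continuous_id).matrix_mul continuous_const)

theorem Matrix.tsum_smul_mul_pow {𝕜 m k : Type*} [NontriviallyNormedField 𝕜] [CompleteSpace 𝕜]
    [Fintype m] [Fintype k] [DecidableEq m] [DecidableEq k] {α : ℕ → 𝕜}
    (hα : ∀ z : 𝕜, Summable fun i => α i * z ^ i) (A : Matrix m k 𝕜) (B : Matrix k m 𝕜) :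
    ∑' i, α i • (A * B) ^ i = α 0 • 1 + A * (∑' i, α (i + 1) • (B * A) ^ i) * B := by
  have hg : Summable fun i => α (i + 1) • (B * A) ^ i :=
    summable_smul_pow (fun _ hr => summable_norm_succ_mul_pow
      (fun _ hs => summable_norm_mul_pow_of_forall_summable hα hs) hr) (B * A)
  have hshift : HasSum (fun i => α (i + 1) • (A * B) ^ (i + 1))
      (A * (∑' i, α (i + 1) • (B * A) ^ i) * B) := by
    convert hg.hasSum.matrix_mul_mul A B using 1
    ext1 i
    rw [mul_pow_succ, Matrix.mul_smul, Matrix.smul_mul]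
  rw [tsum_eq_zero_add' (f := fun i => α i • (A * B) ^ i) hshift.summable, hshift.tsum_eq,
    pow_zero]

theorem matrix_function_low_rank {n r : ℕ} (α : ℕ → ℝ)
    (hα : ∀ z : ℝ, Summable fun i : ℕ => α i * z ^ i)
    (X Y : Matrix (Fin n) (Fin r) ℝ) (T : Matrix (Fin r) (Fin r) ℝ)
    (Z : Matrix (Fin r) (Fin r) ℝ) (hZ : Z = T * (Yᵀ * X)) :
    (∑' i : ℕ, α i • (X * T * Yᵀ) ^ i) =
      α 0 • (1 : Matrix (Fin n) (Fin n) ℝ) +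
        X * (∑' i : ℕ, α (i + 1) • Z ^ i) * T * Yᵀ := by
  rw [hZ, ← Matrix.mul_assoc T, Matrix.mul_assoc X T, Matrix.mul_assoc _ T]
  exact Matrix.tsum_smul_mul_pow hα X (T * Yᵀ)
end

section
/- For all n×n real matrices A and E and every integer ℓ ≥ 0, φ_ℓ(A+E) − φ_ℓ(A) = ∫_0^1 exp((1-s)A)·s^ℓ·E·φ_ℓ(s(A+E)) ds. -/
/-!
Both sides equal the absolutely convergent double series
`∑ i j, A ^ i * E * (A + E) ^ j / (i + j + ℓ + 1)!`. On the left this follows from the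
noncommutative telescoping identity `B ^ (k + 1) - A ^ (k + 1) = ∑_{i + j = k} A ^ i (B - A) B ^ j`.
On the right, multiplying out the series of `φ₀((1 - s) A)` and `φ_ℓ(s (A + E))` and integrating
term by term (dominated convergence) leaves the Beta integrals
`∫₀¹ s ^ a (1 - s) ^ b ds = a! b! / (a + b + 1)!`.
-/

attribute [local instance] Matrix.frobeniusNormedAddCommGroup Matrix.frobeniusNormedSpace

open Matrix

attribute [local instance] Matrix.frobeniusNormedRing Matrix.frobeniusNormedAlgebra

open Finset Nat MeasureTheory

theorem sum_antidiagonal_pow_mul_sub_mul_pow {R : Type*} [Ring R] (a b : R) (n : ℕ) :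
    ∑ p ∈ antidiagonal n, a ^ p.1 * (b - a) * b ^ p.2 = b ^ (n + 1) - a ^ (n + 1) := by
  induction n with
  | zero => simp
  | succ n ih =>
    rw [Nat.sum_antidiagonal_succ]
    simp only [pow_succ' a, mul_assoc a, ← mul_sum, ih]
    rw [pow_succ' b (n + 1)]
    noncomm_ring

theorem HasSum.sum_antidiagonal {α A : Type*} [AddCommMonoid α] [TopologicalSpace α]
    [ContinuousAdd α] [RegularSpace α] [AddCommMonoid A] [HasAntidiagonal A] {f : A × A → α}
    {a : α} (h : HasSum f a) : HasSum (fun n ↦ ∑ p ∈ antidiagonal n, f p) a :=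
  (HasAntidiagonal.sigmaAntidiagonalEquivProd.hasSum_iff.2 h).sigma
    fun n ↦ (antidiagonal n).hasSum f

theorem integral_pow_mul_one_sub_pow (a b : ℕ) :
    ∫ s in (0 : ℝ)..1, s ^ a * (1 - s) ^ b = (a ! * b ! : ℝ) / (a + b + 1)! := by
  induction b generalizing a with
  | zero =>
    simp only [pow_zero, mul_one, integral_pow, one_pow, zero_pow (succ_ne_zero a), sub_zero,
      factorial_zero, add_zero, factorial_succ]
    push_cast
    field_simp
  | succ b ih =>
    have hderiv : ∀ s ∈ Set.uIcc (0 : ℝ) 1,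
        HasDerivAt (fun s : ℝ ↦ s ^ (a + 1) * (1 - s) ^ (b + 1))
          ((a + 1) * (s ^ a * (1 - s) ^ (b + 1)) - (b + 1) * (s ^ (a + 1) * (1 - s) ^ b)) s := by
      intro s _
      refine ((hasDerivAt_pow (a + 1) s).fun_mul
        (((hasDerivAt_id' s).const_sub 1).fun_pow (b + 1))).congr_deriv ?_
      simp only [Nat.add_sub_cancel]
      push_cast
      ring
    -- `s ^ (a + 1) (1 - s) ^ (b + 1)` vanishes at both ends, so the integral of its derivative is 0
    have hparts := intervalIntegral.integral_eq_sub_of_hasDerivAt hderiv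
      (Continuous.intervalIntegrable (by fun_prop) _ _)
    rw [intervalIntegral.integral_sub (Continuous.intervalIntegrable (by fun_prop) _ _)
      (Continuous.intervalIntegrable (by fun_prop) _ _), intervalIntegral.integral_const_mul,
      intervalIntegral.integral_const_mul, ih, show a + 1 + b + 1 = a + (b + 1) + 1 by ring,
      factorial_succ a] at hparts
    rw [factorial_succ b]
    apply mul_left_cancel₀ (show (a : ℝ) + 1 ≠ 0 by positivity)
    push_cast at hparts ⊢
    linear_combination hparts

section NormedAlgebra

variable {𝔸 : Type*} [NormedRing 𝔸] [NormedAlgebra ℝ 𝔸]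

theorem summable_norm_inv_factorial_add_smul_pow (ℓ : ℕ) (x : 𝔸) :
    Summable fun k ↦ ‖((k + ℓ)! : ℝ)⁻¹ • x ^ k‖ := by
  refine (NormedSpace.norm_expSeries_summable' (𝕂 := ℝ) x).of_nonneg_of_le
    (fun _ ↦ norm_nonneg _) fun k ↦ ?_
  rw [norm_smul, norm_smul]
  gcongr
  rw [Real.norm_of_nonneg (by positivity), Real.norm_of_nonneg (by positivity)]
  gcongr
  omega

theorem summable_norm_smul_pow_mul_mul_pow (x y z : 𝔸) {c : ℕ × ℕ → ℝ}
    (hc : ∀ p, |c p| ≤ (p.1 ! : ℝ)⁻¹ * (p.2 ! : ℝ)⁻¹) :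
    Summable fun p : ℕ × ℕ ↦ ‖c p • (x ^ p.1 * y * z ^ p.2)‖ := by
  have hprod := ((NormedSpace.norm_expSeries_summable' (𝕂 := ℝ) x).mul_of_nonneg
    (NormedSpace.norm_expSeries_summable' (𝕂 := ℝ) z) (fun _ ↦ norm_nonneg _)
    (fun _ ↦ norm_nonneg _)).mul_left ‖y‖
  refine hprod.of_nonneg_of_le (fun _ ↦ norm_nonneg _) fun ⟨i, j⟩ ↦ ?_
  calc ‖c (i, j) • (x ^ i * y * z ^ j)‖
      ≤ ((i ! : ℝ)⁻¹ * (j ! : ℝ)⁻¹) * (‖x ^ i‖ * ‖y‖ * ‖z ^ j‖) := by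
        rw [norm_smul, Real.norm_eq_abs]
        gcongr
        · exact hc (i, j)
        · exact (norm_mul_le _ _).trans (by gcongr; exact norm_mul_le _ _)
    _ = ‖y‖ * (‖((i ! : ℝ)⁻¹) • x ^ i‖ * ‖((j ! : ℝ)⁻¹) • z ^ j‖) := by
        simp only [norm_smul, Real.norm_of_nonneg (inv_nonneg.2 (cast_nonneg _))]
        ring

end NormedAlgebra

variable {m : Type*} [Fintype m] [DecidableEq m]

theorem hasSum_phiM (ℓ : ℕ) (M : Matrix m m ℝ) :
    HasSum (fun k ↦ ((k + ℓ)! : ℝ)⁻¹ • M ^ k) (phiM ℓ M) :=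
  (summable_norm_inv_factorial_add_smul_pow ℓ M).of_norm.hasSum

theorem hasSum_phiM_mul_mul_phiM (ℓ ℓ' : ℕ) (X Y Z : Matrix m m ℝ) :
    HasSum
      (fun p : ℕ × ℕ ↦ (((p.1 + ℓ)! : ℝ)⁻¹ * ((p.2 + ℓ')! : ℝ)⁻¹) • (X ^ p.1 * Y * Z ^ p.2))
      (phiM ℓ X * Y * phiM ℓ' Z) := by
  have hterm : ∀ p : ℕ × ℕ,
      (((p.1 + ℓ)! : ℝ)⁻¹ • X ^ p.1 * Y) * (((p.2 + ℓ')! : ℝ)⁻¹ • Z ^ p.2)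
        = (((p.1 + ℓ)! : ℝ)⁻¹ * ((p.2 + ℓ')! : ℝ)⁻¹) • (X ^ p.1 * Y * Z ^ p.2) := fun p ↦ by
    rw [smul_mul_assoc, smul_mul_assoc, mul_smul_comm, smul_smul]
  have hsum : Summable fun p : ℕ × ℕ ↦
      (((p.1 + ℓ)! : ℝ)⁻¹ * ((p.2 + ℓ')! : ℝ)⁻¹) • (X ^ p.1 * Y * Z ^ p.2) := by
    refine (summable_norm_smul_pow_mul_mul_pow X Y Z fun p ↦ ?_).of_norm
    rw [abs_of_nonneg (by positivity)]
    gcongr <;> omega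
  simpa only [hterm] using ((hasSum_phiM ℓ X).mul_right Y).mul (hasSum_phiM ℓ' Z)
    (by simpa only [hterm] using hsum)

theorem hasSum_phiM_add_sub_phiM (ℓ : ℕ) (A E : Matrix m m ℝ) :
    HasSum (fun p : ℕ × ℕ ↦ ((p.1 + p.2 + ℓ + 1)! : ℝ)⁻¹ • (A ^ p.1 * E * (A + E) ^ p.2))
      (phiM ℓ (A + E) - phiM ℓ A) := by
  set D := fun p : ℕ × ℕ ↦ ((p.1 + p.2 + ℓ + 1)! : ℝ)⁻¹ • (A ^ p.1 * E * (A + E) ^ p.2)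
  have hD : Summable D := by
    refine (summable_norm_smul_pow_mul_mul_pow A E (A + E) fun p ↦ ?_).of_norm
    rw [abs_of_nonneg (by positivity), ← mul_inv, ← cast_mul]
    gcongr
    exact (le_of_dvd (factorial_pos _) (factorial_mul_factorial_dvd_factorial_add _ _)).trans
      (factorial_le (by omega))
  have hdiag : ∀ n, ∑ p ∈ antidiagonal n, D p
      = ((n + 1 + ℓ)! : ℝ)⁻¹ • ((A + E) ^ (n + 1) - A ^ (n + 1)) := fun n ↦ by
    rw [← sum_antidiagonal_pow_mul_sub_mul_pow, add_sub_cancel_left, smul_sum]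
    refine sum_congr rfl fun p hp ↦ ?_
    rw [← mem_antidiagonal.1 hp, add_right_comm _ 1 ℓ]
  have hshift : HasSum (fun n ↦ ((n + 1 + ℓ)! : ℝ)⁻¹ • ((A + E) ^ (n + 1) - A ^ (n + 1)))
      (phiM ℓ (A + E) - phiM ℓ A) := by
    simpa [smul_sub] using
      (hasSum_nat_add_iff' 1).2 ((hasSum_phiM ℓ (A + E)).sub (hasSum_phiM ℓ A))
  have htsum : ∑' p, D p = phiM ℓ (A + E) - phiM ℓ A :=
    (show HasSum _ _ by simpa only [hdiag] using hD.hasSum.sum_antidiagonal).unique hshift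
  exact htsum ▸ hD.hasSum

theorem hasSum_pow_smul_phiM_mul_mul_phiM (ℓ : ℕ) (A E : Matrix m m ℝ) (s : ℝ) :
    HasSum (fun p : ℕ × ℕ ↦ (s ^ (p.2 + ℓ) * (1 - s) ^ p.1) •
        (((p.1 ! : ℝ)⁻¹ * ((p.2 + ℓ)! : ℝ)⁻¹) • (A ^ p.1 * E * (A + E) ^ p.2)))
      (s ^ ℓ • (phiM 0 ((1 - s) • A) * E * phiM ℓ (s • (A + E)))) := by
  convert (hasSum_phiM_mul_mul_phiM 0 ℓ ((1 - s) • A) E (s • (A + E))).const_smul (s ^ ℓ)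
    using 1
  funext p
  simp only [add_zero, smul_pow, smul_mul_assoc, mul_smul_comm, smul_smul]
  congr 1
  ring

theorem hasSum_integral_pow_smul_phiM_mul_mul_phiM (ℓ : ℕ) (A E : Matrix m m ℝ) :
    HasSum (fun p : ℕ × ℕ ↦ ((p.1 + p.2 + ℓ + 1)! : ℝ)⁻¹ • (A ^ p.1 * E * (A + E) ^ p.2))
      (∫ s in (0 : ℝ)..1, s ^ ℓ • (phiM 0 ((1 - s) • A) * E * phiM ℓ (s • (A + E)))) := by
  set C := fun p : ℕ × ℕ ↦
    ((p.1 ! : ℝ)⁻¹ * ((p.2 + ℓ)! : ℝ)⁻¹) • (A ^ p.1 * E * (A + E) ^ p.2)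
  have hC : Summable fun p ↦ ‖C p‖ := by
    refine summable_norm_smul_pow_mul_mul_pow A E (A + E) fun p ↦ ?_
    rw [abs_of_nonneg (by positivity)]
    gcongr
    omega
  have hbound : ∀ p, ∀ s ∈ Set.Ioc (0 : ℝ) 1,
      ‖(s ^ (p.2 + ℓ) * (1 - s) ^ p.1) • C p‖ ≤ ‖C p‖ := by
    rintro p s ⟨hs₀, hs₁⟩
    have hs₁' : 0 ≤ 1 - s := sub_nonneg.2 hs₁
    rw [norm_smul, Real.norm_of_nonneg (by positivity)]
    exact mul_le_of_le_one_left (norm_nonneg _)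
      (mul_le_one₀ (pow_le_one₀ hs₀.le hs₁) (by positivity) (pow_le_one₀ hs₁' (by linarith)))
  have hint : ∀ p : ℕ × ℕ, ∫ s in (0 : ℝ)..1, (s ^ (p.2 + ℓ) * (1 - s) ^ p.1) • C p
      = ((p.1 + p.2 + ℓ + 1)! : ℝ)⁻¹ • (A ^ p.1 * E * (A + E) ^ p.2) := fun p ↦ by
    rw [intervalIntegral.integral_smul_const, integral_pow_mul_one_sub_pow, smul_smul,
      show p.2 + ℓ + p.1 + 1 = p.1 + p.2 + ℓ + 1 by ring]
    congr 1
    field_simp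
  refine funext hint ▸ intervalIntegral.hasSum_integral_of_dominated_convergence (μ := volume)
    (fun p _ ↦ ‖C p‖)
    (fun p ↦ (Continuous.aestronglyMeasurable (by fun_prop)).smul_const (C p))
    (fun p ↦ .of_forall fun s hs ↦ hbound p s (by rwa [Set.uIoc_of_le zero_le_one] at hs))
    (.of_forall fun _ _ ↦ hC) intervalIntegrable_const
    (.of_forall fun s _ ↦ hasSum_pow_smul_phiM_mul_mul_phiM ℓ A E s)

theorem phiM_perturbation_integral {n : ℕ} (A E : Matrix (Fin n) (Fin n) ℝ) (ℓ : ℕ) :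
    phiM ℓ (A + E) - phiM ℓ A =
      ∫ s in (0:ℝ)..1,
        s ^ ℓ • (phiM 0 ((1 - s) • A) * E * phiM ℓ (s • (A + E))) :=
  (hasSum_phiM_add_sub_phiM ℓ A E).unique (hasSum_integral_pow_smul_phiM_mul_mul_phiM ℓ A E)
end

section
/- Let f(z) = Σ_{i=0}^∞ α_i z^i be everywhere convergent, Ã = X T Yᵀ with X, Y ∈ ℝ^{n×r}, T ∈ ℝ^{r×r}, Z = T Yᵀ X, and W = Y Tᵀ. Then the Kronecker form K_f(Ã) of the Fréchet derivative of f at Ã decomposes as K_f(Ã) = Ψ₁ + Ψ₂ + Ψ₃, where Ψ₁ = α₁ (I ⊗ I), Ψ₂ = (W ⊗ I)·(Σ_{i=2}^∞ α_i (Zᵀ)^{i-2} ⊗ I)·(X ⊗ I)ᵀ + (I ⊗ X)·(Σ_{i=2}^∞ α_i I ⊗ Z^{i-2})·(I ⊗ W)ᵀ, and Ψ₃ = (W ⊗ X)·(Σ_{i=3}^∞ α_i Σ_{j=2}^{i-1} (Zᵀ)^{i-j-1} ⊗ Z^{j-2})·(X ⊗ W)ᵀ. -/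
open Matrix Kronecker

/-- `_root_.vec` stacks the columns of a matrix into one long vector. -/
def vec {m q : ℕ} (M : Matrix (Fin m) (Fin q) ℝ) : Fin q × Fin m → ℝ :=
  fun p => M p.2 p.1

namespace KFDaux


lemma entry_pow_le {n : ℕ} (A : Matrix (Fin n) (Fin n) ℝ) :
    ∃ c : ℝ, 1 ≤ c ∧ ∀ (j : ℕ) (a b : Fin n), |(A ^ j) a b| ≤ c ^ j := by
  set m := ∑ u, ∑ v, |A u v| with hm
  have hm0 : 0 ≤ m := by positivity
  have hn0 : (0:ℝ) ≤ (n:ℝ) := by positivity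
  refine ⟨(n : ℝ) * m + 1, le_add_of_nonneg_left (by positivity), ?_⟩
  have hAm : ∀ a b : Fin n, |A a b| ≤ m := by
    intro a b
    calc |A a b| ≤ ∑ v, |A a v| :=
          Finset.single_le_sum (f := fun v => |A a v|) (fun _ _ => abs_nonneg _)
            (Finset.mem_univ b)
      _ ≤ m := Finset.single_le_sum (f := fun u => ∑ v, |A u v|)
            (fun _ _ => Finset.sum_nonneg fun _ _ => abs_nonneg _) (Finset.mem_univ a)
  set c := (n:ℝ) * m + 1 with hc
  have hc0 : (0:ℝ) ≤ c := by positivity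
  intro j
  induction j with
  | zero =>
    intro a b
    simp only [pow_zero, Matrix.one_apply]
    split_ifs <;> simp
  | succ j ih =>
    intro a b
    have hcj : (0:ℝ) ≤ c ^ j := pow_nonneg hc0 j
    calc |(A ^ (j+1)) a b| = |∑ k, (A ^ j) a k * A k b| := by rw [pow_succ, Matrix.mul_apply]
      _ ≤ ∑ k, |(A ^ j) a k * A k b| := Finset.abs_sum_le_sum_abs _ _
      _ ≤ ∑ _k : Fin n, c ^ j * m := Finset.sum_le_sum (fun k _ => by
            rw [abs_mul]
            exact mul_le_mul (ih a k) (hAm k b) (abs_nonneg _) hcj)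
      _ = (n : ℝ) * m * c ^ j := by
            rw [Finset.sum_const, Finset.card_univ, Fintype.card_fin, nsmul_eq_mul]; ring
      _ ≤ c * c ^ j := by nlinarith
      _ = c ^ (j+1) := by ring

lemma scalar_summable (α : ℕ → ℝ) (hα : ∀ z : ℝ, Summable fun i : ℕ => α i * z ^ i)
    (d : ℕ) (r : ℝ) (hr : 0 ≤ r) :
    Summable fun i : ℕ => ((i : ℝ) + 1) * |α (i + d)| * r ^ i := by
  set z := 2 * r + 1 with hz
  have hz1 : (1:ℝ) ≤ z := by simp [hz]; linarith
  have hz0 : (0:ℝ) < z := by linarith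
  -- boundedness of the terms at z
  have h0 := (hα z).tendsto_atTop_zero
  obtain ⟨N, hN⟩ := (Metric.tendsto_atTop.1 h0) 1 one_pos
  set C := 1 + ∑ i ∈ Finset.range N, |α i * z ^ i| with hC
  have hCnn : (0:ℝ) ≤ C := by positivity
  have hCb : ∀ i, |α i * z ^ i| ≤ C := by
    intro i
    rcases le_or_gt N i with hi | hi
    · have := hN i hi
      rw [Real.dist_eq, sub_zero] at this
      have : |α i * z ^ i| ≤ 1 := le_of_lt this
      have hs : (0:ℝ) ≤ ∑ i ∈ Finset.range N, |α i * z ^ i| :=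
        Finset.sum_nonneg fun _ _ => abs_nonneg _
      linarith
    · have : |α i * z ^ i| ≤ ∑ j ∈ Finset.range N, |α j * z ^ j| :=
        Finset.single_le_sum (f := fun j => |α j * z ^ j|) (fun _ _ => abs_nonneg _)
          (Finset.mem_range.2 hi)
      linarith
  set x := r / z with hx
  have hx0 : 0 ≤ x := div_nonneg hr hz0.le
  have hx1 : x < 1 := (div_lt_one hz0).2 (by linarith)
  have hsum : Summable fun i : ℕ => C * (((i:ℝ) + 1) * x ^ i) := by
    apply Summable.mul_left
    have h1 : Summable fun i : ℕ => (i:ℝ) ^ 1 * x ^ i :=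
      summable_pow_mul_geometric_of_norm_lt_one 1 (by rwa [Real.norm_eq_abs, abs_of_nonneg hx0])
    have h2 : Summable fun i : ℕ => x ^ i := summable_geometric_of_lt_one hx0 hx1
    exact (h1.add h2).congr (fun i => by ring)
  apply Summable.of_norm_bounded hsum
  intro i
  have hzp : (0:ℝ) < z ^ (i + d) := pow_pos hz0 _
  have hαb : |α (i + d)| ≤ C / z ^ (i + d) := by
    rw [le_div_iff₀ hzp]
    calc |α (i + d)| * z ^ (i + d) = |α (i + d) * z ^ (i + d)| := by
          rw [abs_mul, abs_of_pos hzp]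
      _ ≤ C := hCb _
  have hnn : (0:ℝ) ≤ ((i:ℝ) + 1) := by positivity
  rw [Real.norm_eq_abs, abs_of_nonneg (by positivity)]
  have hzd : (1:ℝ) ≤ z ^ d := one_le_pow₀ hz1
  have hzi : (0:ℝ) < z ^ i := pow_pos hz0 i
  have key : ((i:ℝ) + 1) * |α (i + d)| * r ^ i ≤ ((i:ℝ)+1) * (C / z ^ (i+d)) * r ^ i := by
    apply mul_le_mul_of_nonneg_right (mul_le_mul_of_nonneg_left hαb hnn) (pow_nonneg hr i)
  refine key.trans ?_
  rw [pow_add]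
  have : ((i:ℝ)+1) * (C / (z ^ i * z ^ d)) * r ^ i =
      (C * (((i:ℝ)+1) * x ^ i)) / z ^ d := by
    field_simp [hx]
    rw [hx, div_pow]; field_simp
  rw [this]
  exact div_le_self (by positivity) hzd



lemma summable_matrix {I J : Type*} {f : ℕ → Matrix I J ℝ}
    (h : ∀ a b, Summable fun i => f i a b) : Summable f :=
  Pi.summable.2 fun a => Pi.summable.2 fun b => h a b

lemma matrix_tsum_apply {m p : ℕ} {f : ℕ → Matrix (Fin m) (Fin p) ℝ}
    (hf : Summable f) (a : Fin m) (b : Fin p) :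
    (∑' i, f i) a b = ∑' i, f i a b := by
  have h1 : (∑' i, f i) a = ∑' i, f i a := tsum_apply hf
  rw [h1, tsum_apply (Pi.summable.1 hf a)]

lemma vec_injective {m q : ℕ} : Function.Injective (_root_.vec (m := m) (q := q)) := by
  intro M N h
  ext a b
  exact congrFun h (b, a)

lemma vec_tsum {m q : ℕ} {f : ℕ → Matrix (Fin m) (Fin q) ℝ} (hf : Summable f) :
    _root_.vec (∑' i, f i) = ∑' i, _root_.vec (f i) := by
  have hs : Summable fun i => _root_.vec (f i) :=
    Pi.summable.2 fun p => Pi.summable.1 (Pi.summable.1 hf p.2) p.1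
  funext p
  rw [tsum_apply hs]
  exact matrix_tsum_apply hf p.2 p.1

lemma triple_bound {n : ℕ} (P Q E : Matrix (Fin n) (Fin n) ℝ) {p q : ℝ}
    (hP : ∀ a b, |P a b| ≤ p) (hQ : ∀ a b, |Q a b| ≤ q) (hp : 0 ≤ p) (hq : 0 ≤ q)
    (a b : Fin n) :
    |(P * E * Q) a b| ≤ p * q * (∑ u, ∑ v, |E u v|) := by
  have expand : (P * E * Q) a b = ∑ u, ∑ v, P a u * E u v * Q v b := by
    rw [Matrix.mul_apply]
    simp_rw [Matrix.mul_apply, Finset.sum_mul]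
    rw [Finset.sum_comm]
  rw [expand]
  calc |∑ u, ∑ v, P a u * E u v * Q v b| ≤ ∑ u, |∑ v, P a u * E u v * Q v b| :=
        Finset.abs_sum_le_sum_abs _ _
    _ ≤ ∑ u, ∑ v, |P a u * E u v * Q v b| :=
        Finset.sum_le_sum fun u _ => Finset.abs_sum_le_sum_abs _ _
    _ ≤ ∑ u, ∑ v, p * q * |E u v| := by
        refine Finset.sum_le_sum fun u _ => Finset.sum_le_sum fun v _ => ?_
        rw [abs_mul, abs_mul]
        calc |P a u| * |E u v| * |Q v b| ≤ p * |E u v| * q := by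
              apply mul_le_mul (mul_le_mul (hP a u) le_rfl (abs_nonneg _) hp) (hQ v b)
                (abs_nonneg _) (by positivity)
          _ = p * q * |E u v| := by ring
    _ = p * q * (∑ u, ∑ v, |E u v|) := by rw [Finset.mul_sum]; simp_rw [Finset.mul_sum]

lemma sandwich_mulVec_tsum {I J J' I' : Type*} [Fintype J] [Fintype J'] [Fintype I']
    (P : Matrix I J ℝ) (Q : Matrix J' I' ℝ) (v : I' → ℝ)
    (f : ℕ → Matrix J J' ℝ) (hf : Summable f) :
    (P * (∑' k, f k) * Q).mulVec v = ∑' k, (P * f k * Q).mulVec v := by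
  let L : Matrix J J' ℝ →ₗ[ℝ] (I → ℝ) :=
    { toFun := fun M => (P * M * Q).mulVec v
      map_add' := fun M₁ M₂ => by
        simp [Matrix.mul_add, Matrix.add_mul, Matrix.add_mulVec]
      map_smul' := fun c M => by
        simp [Matrix.mul_smul, Matrix.smul_mul, Matrix.smul_mulVec] }
  let Lc : Matrix J J' ℝ →L[ℝ] (I → ℝ) := ⟨L, L.continuous_of_finiteDimensional⟩
  exact Lc.map_tsum hf

lemma kron_mulVec {n : ℕ} (C A : Matrix (Fin n) (Fin n) ℝ) (E : Matrix (Fin n) (Fin n) ℝ) :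
    (C ⊗ₖ A).mulVec (_root_.vec E) = _root_.vec (A * E * Cᵀ) := by
  funext p
  obtain ⟨q, m⟩ := p
  simp only [Matrix.mulVec, dotProduct, _root_.vec, Fintype.sum_prod_type,
    Matrix.kroneckerMap_apply, Matrix.mul_apply, Matrix.transpose_apply, Finset.sum_mul]
  refine Finset.sum_congr rfl fun u _ => Finset.sum_congr rfl fun v _ => by ring


variable {n : ℕ}

lemma summable_of_entry_bound (α : ℕ → ℝ) (hα : ∀ z : ℝ, Summable fun i : ℕ => α i * z ^ i)
    {I J : Type*} {f : ℕ → Matrix I J ℝ} (d : ℕ) (C r : ℝ) (hr : 0 ≤ r)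
    (h : ∀ (i : ℕ) (a : I) (b : J), |f i a b| ≤ C * (((i:ℝ)+1) * |α (i+d)| * r ^ i)) :
    Summable f := by
  apply summable_matrix; intro a b
  apply Summable.of_norm_bounded ((scalar_summable α hα d r hr).mul_left C)
  intro i; rw [Real.norm_eq_abs]; exact h i a b

section
variable (α : ℕ → ℝ) (hα : ∀ z : ℝ, Summable fun i : ℕ => α i * z ^ i)
    (A E : Matrix (Fin n) (Fin n) ℝ)
include hα

lemma summable_g :
    Summable (fun i : ℕ =>
      α (i+1) • ∑ j ∈ Finset.range (i+1), A ^ j * E * A ^ (i-j)) := by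
  obtain ⟨c, hc1, hc⟩ := entry_pow_le A
  have hc0 : (0:ℝ) ≤ c := zero_le_one.trans hc1
  set e := ∑ u, ∑ v, |E u v| with he
  have he0 : (0:ℝ) ≤ e := by positivity
  apply summable_of_entry_bound α hα 1 e c hc0
  intro i a b
  rw [Matrix.smul_apply, smul_eq_mul, abs_mul, Matrix.sum_apply]
  have hterm : ∀ j ∈ Finset.range (i+1), |(A^j * E * A^(i-j)) a b| ≤ c ^ i * e := by
    intro j hj
    have hj' : j ≤ i := Nat.lt_succ_iff.1 (Finset.mem_range.1 hj)
    have h1 := triple_bound (A^j) (A^(i-j)) E (p := c^j) (q := c^(i-j))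
      (fun a b => hc j a b) (fun a b => hc _ a b) (pow_nonneg hc0 _) (pow_nonneg hc0 _) a b
    refine h1.trans (le_of_eq ?_)
    rw [← pow_add]
    congr 2
    omega
  calc |α (i+1)| * |∑ j ∈ Finset.range (i+1), (A^j * E * A^(i-j)) a b|
      ≤ |α (i+1)| * ∑ j ∈ Finset.range (i+1), |(A^j * E * A^(i-j)) a b| :=
        mul_le_mul_of_nonneg_left (Finset.abs_sum_le_sum_abs _ _) (abs_nonneg _)
    _ ≤ |α (i+1)| * ∑ _j ∈ Finset.range (i+1), c ^ i * e :=
        mul_le_mul_of_nonneg_left (Finset.sum_le_sum hterm) (abs_nonneg _)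
    _ = e * (((i:ℝ)+1) * |α (i+1)| * c ^ i) := by
        rw [Finset.sum_const, Finset.card_range, nsmul_eq_mul]
        push_cast; ring

lemma summable_b :
    Summable (fun k : ℕ => α (k+2) • (E * A ^ (k+1))) := by
  obtain ⟨c, hc1, hc⟩ := entry_pow_le A
  have hc0 : (0:ℝ) ≤ c := zero_le_one.trans hc1
  set e := ∑ u, ∑ v, |E u v| with he
  have he0 : (0:ℝ) ≤ e := by positivity
  apply summable_of_entry_bound α hα 2 (c * e) c hc0
  intro k a b
  rw [Matrix.smul_apply, smul_eq_mul, abs_mul]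
  have h1 : |(E * A ^ (k+1)) a b| ≤ c ^ k * c * e := by
    have := triple_bound 1 (A^(k+1)) E (p := 1) (q := c^(k+1))
      (fun a b => by simp [Matrix.one_apply]; split_ifs <;> simp)
      (fun a b => hc _ a b) zero_le_one (pow_nonneg hc0 _) a b
    rw [Matrix.one_mul] at this
    refine this.trans (le_of_eq ?_)
    ring
  calc |α (k+2)| * |(E * A ^ (k+1)) a b| ≤ |α (k+2)| * (c ^ k * c * e) :=
        mul_le_mul_of_nonneg_left h1 (abs_nonneg _)
    _ ≤ (c * e) * (((k:ℝ)+1) * |α (k+2)| * c ^ k) := by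
        nlinarith [abs_nonneg (α (k+2)), pow_nonneg hc0 k,
          mul_nonneg (mul_nonneg (abs_nonneg (α (k+2))) (pow_nonneg hc0 k)) (mul_nonneg hc0 he0),
          Nat.cast_nonneg (α := ℝ) k]

lemma summable_c :
    Summable (fun k : ℕ => α (k+2) • (A ^ (k+1) * E)) := by
  obtain ⟨c, hc1, hc⟩ := entry_pow_le A
  have hc0 : (0:ℝ) ≤ c := zero_le_one.trans hc1
  set e := ∑ u, ∑ v, |E u v| with he
  have he0 : (0:ℝ) ≤ e := by positivity
  apply summable_of_entry_bound α hα 2 (c * e) c hc0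
  intro k a b
  rw [Matrix.smul_apply, smul_eq_mul, abs_mul]
  have h1 : |(A ^ (k+1) * E) a b| ≤ c ^ k * c * e := by
    have := triple_bound (A^(k+1)) 1 E (p := c^(k+1)) (q := 1)
      (fun a b => hc _ a b)
      (fun a b => by simp [Matrix.one_apply]; split_ifs <;> simp)
      (pow_nonneg hc0 _) zero_le_one a b
    rw [Matrix.mul_one] at this
    refine this.trans (le_of_eq ?_)
    ring
  calc |α (k+2)| * |(A ^ (k+1) * E) a b| ≤ |α (k+2)| * (c ^ k * c * e) :=
        mul_le_mul_of_nonneg_left h1 (abs_nonneg _)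
    _ ≤ (c * e) * (((k:ℝ)+1) * |α (k+2)| * c ^ k) := by
        nlinarith [abs_nonneg (α (k+2)), pow_nonneg hc0 k,
          mul_nonneg (mul_nonneg (abs_nonneg (α (k+2))) (pow_nonneg hc0 k)) (mul_nonneg hc0 he0),
          Nat.cast_nonneg (α := ℝ) k]

lemma summable_d :
    Summable (fun k : ℕ =>
      α (k+2) • ∑ t ∈ Finset.range k, A ^ (t+1) * E * A ^ (k-t)) := by
  obtain ⟨c, hc1, hc⟩ := entry_pow_le A
  have hc0 : (0:ℝ) ≤ c := zero_le_one.trans hc1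
  set e := ∑ u, ∑ v, |E u v| with he
  have he0 : (0:ℝ) ≤ e := by positivity
  apply summable_of_entry_bound α hα 2 (c * e) c hc0
  intro k a b
  rw [Matrix.smul_apply, smul_eq_mul, abs_mul, Matrix.sum_apply]
  have hterm : ∀ t ∈ Finset.range k, |(A^(t+1) * E * A^(k-t)) a b| ≤ c ^ k * c * e := by
    intro t ht
    have ht' : t < k := Finset.mem_range.1 ht
    have h1 := triple_bound (A^(t+1)) (A^(k-t)) E (p := c^(t+1)) (q := c^(k-t))
      (fun a b => hc _ a b) (fun a b => hc _ a b) (pow_nonneg hc0 _) (pow_nonneg hc0 _) a b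
    refine h1.trans (le_of_eq ?_)
    rw [← pow_add]
    have : t + 1 + (k - t) = k + 1 := by omega
    rw [this]
    ring
  calc |α (k+2)| * |∑ t ∈ Finset.range k, (A^(t+1) * E * A^(k-t)) a b|
      ≤ |α (k+2)| * ∑ t ∈ Finset.range k, |(A^(t+1) * E * A^(k-t)) a b| :=
        mul_le_mul_of_nonneg_left (Finset.abs_sum_le_sum_abs _ _) (abs_nonneg _)
    _ ≤ |α (k+2)| * ∑ _t ∈ Finset.range k, c ^ k * c * e :=
        mul_le_mul_of_nonneg_left (Finset.sum_le_sum hterm) (abs_nonneg _)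
    _ ≤ (c * e) * (((k:ℝ)+1) * |α (k+2)| * c ^ k) := by
        rw [Finset.sum_const, Finset.card_range, nsmul_eq_mul]
        have hk : (k:ℝ) ≤ (k:ℝ) + 1 := by linarith
        nlinarith [abs_nonneg (α (k+2)), pow_nonneg hc0 k, Nat.cast_nonneg (α := ℝ) k,
          mul_nonneg (mul_nonneg hc0 he0) (mul_nonneg (abs_nonneg (α (k+2))) (pow_nonneg hc0 k))]

lemma main_identity :
    (∑' i : ℕ, α (i + 1) • ∑ j ∈ Finset.range (i + 1), A ^ j * E * A ^ (i - j))
    = α 1 • E + (∑' k : ℕ, α (k+2) • (E * A ^ (k+1)))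
      + (∑' k : ℕ, α (k+2) • (A ^ (k+1) * E))
      + ∑' k : ℕ, α (k+3) • ∑ t ∈ Finset.range (k+1), A ^ (t+1) * E * A ^ (k+1-t) := by
  have hg := summable_g α hα A E
  have hb := summable_b α hα A E
  have hc := summable_c α hα A E
  have hd := summable_d α hα A E
  rw [hg.tsum_eq_zero_add]
  have h0 : α (0+1) • ∑ j ∈ Finset.range (0+1), A ^ j * E * A ^ (0-j) = α 1 • E := by
    simp
  rw [h0]
  have hsplit : ∀ k : ℕ,
      α (k+1+1) • ∑ j ∈ Finset.range (k+1+1), A ^ j * E * A ^ (k+1-j)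
      = α (k+2) • (E * A ^ (k+1)) + α (k+2) • (A ^ (k+1) * E)
        + α (k+2) • ∑ t ∈ Finset.range k, A ^ (t+1) * E * A ^ (k-t) := by
    intro k
    have e1 : ∑ j ∈ Finset.range (k+1+1), A ^ j * E * A ^ (k+1-j)
        = (∑ j ∈ Finset.range (k+1), A ^ j * E * A ^ (k+1-j)) + A ^ (k+1) * E * A ^ 0 := by
      rw [Finset.sum_range_succ]
      congr 3
      omega
    have e2 : ∑ j ∈ Finset.range (k+1), A ^ j * E * A ^ (k+1-j)
        = (∑ t ∈ Finset.range k, A ^ (t+1) * E * A ^ (k-t)) + A ^ 0 * E * A ^ (k+1) := by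
      rw [Finset.sum_range_succ']
      congr 1
      refine Finset.sum_congr rfl fun t _ => ?_
      congr 2
      omega
    rw [e1, e2, pow_zero, Matrix.mul_one, Matrix.one_mul, smul_add, smul_add]
    abel
  have hsum_bcd : Summable fun k =>
      α (k+2) • (E * A ^ (k+1)) + α (k+2) • (A ^ (k+1) * E)
        + α (k+2) • ∑ t ∈ Finset.range k, A ^ (t+1) * E * A ^ (k-t) := (hb.add hc).add hd
  calc α 1 • E + ∑' k : ℕ, α (k+1+1) • ∑ j ∈ Finset.range (k+1+1), A ^ j * E * A ^ (k+1-j)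
      = α 1 • E + ∑' k : ℕ, (α (k+2) • (E * A ^ (k+1)) + α (k+2) • (A ^ (k+1) * E)
        + α (k+2) • ∑ t ∈ Finset.range k, A ^ (t+1) * E * A ^ (k-t)) := by
        rw [tsum_congr hsplit]
    _ = α 1 • E + ((∑' k : ℕ, α (k+2) • (E * A ^ (k+1)))
        + (∑' k : ℕ, α (k+2) • (A ^ (k+1) * E))
        + ∑' k : ℕ, α (k+2) • ∑ t ∈ Finset.range k, A ^ (t+1) * E * A ^ (k-t)) := by
        rw [(hb.add hc).tsum_add hd, hb.tsum_add hc]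
    _ = α 1 • E + (∑' k : ℕ, α (k+2) • (E * A ^ (k+1)))
        + (∑' k : ℕ, α (k+2) • (A ^ (k+1) * E))
        + ∑' k : ℕ, α (k+3) • ∑ t ∈ Finset.range (k+1), A ^ (t+1) * E * A ^ (k+1-t) := by
        rw [hd.tsum_eq_zero_add]
        simp only [Finset.range_zero, Finset.sum_empty, smul_zero, zero_add]
        try abel
  
end

lemma vec_smul {m q : ℕ} (a : ℝ) (M : Matrix (Fin m) (Fin q) ℝ) :
    _root_.vec (a • M) = a • _root_.vec M := rfl

lemma vec_add {m q : ℕ} (M N : Matrix (Fin m) (Fin q) ℝ) :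
    _root_.vec (M + N) = _root_.vec M + _root_.vec N := rfl

lemma vec_sum {m q : ℕ} {s : Finset ℕ} (M : ℕ → Matrix (Fin m) (Fin q) ℝ) :
    _root_.vec (∑ t ∈ s, M t) = ∑ t ∈ s, _root_.vec (M t) := by
  funext p
  simp [_root_.vec, Matrix.sum_apply]
lemma sum_mulVec {I J : Type*} [Fintype J] {s : Finset ℕ} (N : ℕ → Matrix I J ℝ) (v : J → ℝ) :
    (∑ t ∈ s, N t).mulVec v = ∑ t ∈ s, (N t).mulVec v := by
  funext i
  simp only [Matrix.mulVec, dotProduct, Matrix.sum_apply, Finset.sum_apply, Finset.sum_mul]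
  exact Finset.sum_comm

end KFDaux

open KFDaux in
theorem kronecker_form_decomposition {n r : ℕ} (α : ℕ → ℝ)
    (hα : ∀ z : ℝ, Summable fun i : ℕ => α i * z ^ i)
    (X Y : Matrix (Fin n) (Fin r) ℝ) (T : Matrix (Fin r) (Fin r) ℝ)
    (Atil : Matrix (Fin n) (Fin n) ℝ) (hA : Atil = X * T * Yᵀ)
    (Z : Matrix (Fin r) (Fin r) ℝ) (hZ : Z = T * (Yᵀ * X))
    (W : Matrix (Fin n) (Fin r) ℝ) (hW : W = Y * Tᵀ)
    (Lf : Matrix (Fin n) (Fin n) ℝ → Matrix (Fin n) (Fin n) ℝ)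
    (hLf : ∀ E, Lf E = ∑' i : ℕ,
      α (i + 1) • ∑ j ∈ Finset.range (i + 1), Atil ^ j * E * Atil ^ (i - j))
    (K : Matrix (Fin n × Fin n) (Fin n × Fin n) ℝ)
    (hK : ∀ E : Matrix (Fin n) (Fin n) ℝ, _root_.vec (Lf E) = K.mulVec (_root_.vec E))
    (Ψ₁ Ψ₂ Ψ₃ : Matrix (Fin n × Fin n) (Fin n × Fin n) ℝ)
    (hΨ₁ : Ψ₁ = α 1 • ((1 : Matrix (Fin n) (Fin n) ℝ) ⊗ₖ (1 : Matrix (Fin n) (Fin n) ℝ)))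
    (hΨ₂ : Ψ₂ =
      (W ⊗ₖ (1 : Matrix (Fin n) (Fin n) ℝ)) *
        (∑' k : ℕ, α (k + 2) • (((Zᵀ) ^ k) ⊗ₖ (1 : Matrix (Fin n) (Fin n) ℝ))) *
        (X ⊗ₖ (1 : Matrix (Fin n) (Fin n) ℝ))ᵀ +
      ((1 : Matrix (Fin n) (Fin n) ℝ) ⊗ₖ X) *
        (∑' k : ℕ, α (k + 2) • ((1 : Matrix (Fin n) (Fin n) ℝ) ⊗ₖ (Z ^ k))) *
        ((1 : Matrix (Fin n) (Fin n) ℝ) ⊗ₖ W)ᵀ)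
    (hΨ₃ : Ψ₃ =
      (W ⊗ₖ X) *
        (∑' k : ℕ, α (k + 3) •
          ∑ t ∈ Finset.range (k + 1), ((Zᵀ) ^ (k - t)) ⊗ₖ (Z ^ t)) *
        (X ⊗ₖ W)ᵀ) :
    K = Ψ₁ + Ψ₂ + Ψ₃ := by
  -- power formulas
  have hWT : Wᵀ = T * Yᵀ := by
    rw [hW, Matrix.transpose_mul, Matrix.transpose_transpose]
  have hpow : ∀ k : ℕ, Atil ^ (k + 1) = X * Z ^ k * Wᵀ := by
    intro k
    induction k with
    | zero => simp [hA, hWT, Matrix.mul_assoc]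
    | succ k ih =>
      calc Atil ^ (k + 2) = Atil ^ (k + 1) * Atil := by rw [pow_succ]
        _ = (X * Z ^ k * Wᵀ) * (X * T * Yᵀ) := by rw [ih, hA]
        _ = X * Z ^ (k + 1) * Wᵀ := by
            rw [pow_succ, hZ, hWT]
            simp only [Matrix.mul_assoc]
  have hTpow : ∀ k : ℕ, (Atil ^ (k + 1))ᵀ = W * (Zᵀ) ^ k * Xᵀ := by
    intro k
    rw [hpow k, Matrix.transpose_mul, Matrix.transpose_mul, Matrix.transpose_pow,
      Matrix.transpose_transpose, ← Matrix.mul_assoc]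
  -- summability of the three series appearing in Ψ₂, Ψ₃
  obtain ⟨c, hc1, hcb⟩ := entry_pow_le Z
  have hc0 : (0 : ℝ) ≤ c := zero_le_one.trans hc1
  have hZt : ∀ (k : ℕ) (a b : Fin r), |((Zᵀ) ^ k) a b| ≤ c ^ k := by
    intro k a b
    rw [← Matrix.transpose_pow, Matrix.transpose_apply]
    exact hcb k b a
  have hone : ∀ (a b : Fin n), |(1 : Matrix (Fin n) (Fin n) ℝ) a b| ≤ 1 := by
    intro a b
    rw [Matrix.one_apply]
    split_ifs <;> simp
  have h6 : Summable fun k : ℕ =>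
      α (k + 2) • (((Zᵀ) ^ k) ⊗ₖ (1 : Matrix (Fin n) (Fin n) ℝ)) := by
    apply summable_of_entry_bound α hα 2 1 c hc0
    rintro k ⟨a1, a2⟩ ⟨b1, b2⟩
    rw [Matrix.smul_apply, smul_eq_mul, abs_mul, Matrix.kroneckerMap_apply, abs_mul]
    have hk1 : (1 : ℝ) ≤ (k : ℝ) + 1 := by
      have : (0:ℝ) ≤ (k : ℝ) := Nat.cast_nonneg k
      linarith
    calc |α (k + 2)| * (|((Zᵀ) ^ k) a1 b1| * |(1 : Matrix (Fin n) (Fin n) ℝ) a2 b2|)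
        ≤ |α (k + 2)| * (c ^ k * 1) := by
          apply mul_le_mul_of_nonneg_left
            (mul_le_mul (hZt k a1 b1) (hone a2 b2) (abs_nonneg _) (pow_nonneg hc0 _))
            (abs_nonneg _)
      _ = |α (k + 2)| * c ^ k := by ring
      _ ≤ 1 * (((k : ℝ) + 1) * |α (k + 2)| * c ^ k) := by
          nlinarith [abs_nonneg (α (k + 2)), pow_nonneg hc0 k,
            mul_nonneg (abs_nonneg (α (k + 2))) (pow_nonneg hc0 k)]
  have h7 : Summable fun k : ℕ =>
      α (k + 2) • ((1 : Matrix (Fin n) (Fin n) ℝ) ⊗ₖ (Z ^ k)) := by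
    apply summable_of_entry_bound α hα 2 1 c hc0
    rintro k ⟨a1, a2⟩ ⟨b1, b2⟩
    rw [Matrix.smul_apply, smul_eq_mul, abs_mul, Matrix.kroneckerMap_apply, abs_mul]
    calc |α (k + 2)| * (|(1 : Matrix (Fin n) (Fin n) ℝ) a1 b1| * |(Z ^ k) a2 b2|)
        ≤ |α (k + 2)| * (1 * c ^ k) := by
          apply mul_le_mul_of_nonneg_left
            (mul_le_mul (hone a1 b1) (hcb k a2 b2) (abs_nonneg _) zero_le_one)
            (abs_nonneg _)
      _ = |α (k + 2)| * c ^ k := by ring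
      _ ≤ 1 * (((k : ℝ) + 1) * |α (k + 2)| * c ^ k) := by
          nlinarith [abs_nonneg (α (k + 2)), pow_nonneg hc0 k,
            mul_nonneg (abs_nonneg (α (k + 2))) (pow_nonneg hc0 k)]
  have h8 : Summable fun k : ℕ =>
      α (k + 3) • ∑ t ∈ Finset.range (k + 1), ((Zᵀ) ^ (k - t)) ⊗ₖ (Z ^ t) := by
    apply summable_of_entry_bound α hα 3 1 c hc0
    rintro k ⟨a1, a2⟩ ⟨b1, b2⟩
    rw [Matrix.smul_apply, smul_eq_mul, abs_mul, Matrix.sum_apply]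
    have hterm : ∀ t ∈ Finset.range (k + 1),
        |(((Zᵀ) ^ (k - t)) ⊗ₖ (Z ^ t)) (a1, a2) (b1, b2)| ≤ c ^ k := by
      intro t ht
      have htk : t ≤ k := Nat.lt_succ_iff.1 (Finset.mem_range.1 ht)
      rw [Matrix.kroneckerMap_apply, abs_mul]
      calc |((Zᵀ) ^ (k - t)) a1 b1| * |(Z ^ t) a2 b2| ≤ c ^ (k - t) * c ^ t :=
            mul_le_mul (hZt _ a1 b1) (hcb t a2 b2) (abs_nonneg _) (pow_nonneg hc0 _)
        _ = c ^ k := by rw [← pow_add]; congr 1; omega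
    calc |α (k + 3)| * |∑ t ∈ Finset.range (k + 1),
          (((Zᵀ) ^ (k - t)) ⊗ₖ (Z ^ t)) (a1, a2) (b1, b2)|
        ≤ |α (k + 3)| * ∑ t ∈ Finset.range (k + 1),
            |(((Zᵀ) ^ (k - t)) ⊗ₖ (Z ^ t)) (a1, a2) (b1, b2)| :=
          mul_le_mul_of_nonneg_left (Finset.abs_sum_le_sum_abs _ _) (abs_nonneg _)
      _ ≤ |α (k + 3)| * ∑ _t ∈ Finset.range (k + 1), c ^ k :=
          mul_le_mul_of_nonneg_left (Finset.sum_le_sum hterm) (abs_nonneg _)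
      _ = 1 * (((k : ℝ) + 1) * |α (k + 3)| * c ^ k) := by
          rw [Finset.sum_const, Finset.card_range, nsmul_eq_mul]
          push_cast; ring
  -- main computation for each E
  have key : ∀ E : Matrix (Fin n) (Fin n) ℝ,
      K.mulVec (_root_.vec E) = (Ψ₁ + Ψ₂ + Ψ₃).mulVec (_root_.vec E) := by
    intro E
    have hb := summable_b α hα Atil E
    have hcE := summable_c α hα Atil E
    have hd' : Summable fun k : ℕ =>
        α (k + 3) • ∑ t ∈ Finset.range (k + 1), Atil ^ (t + 1) * E * Atil ^ (k + 1 - t) := by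
      have h0 := (summable_nat_add_iff 1).2 (summable_d α hα Atil E)
      refine h0.congr fun k => ?_
      have h1 : k + 1 + 2 = k + 3 := by omega
      simp only [h1]
    have p1 : (α 1 • ((1 : Matrix (Fin n) (Fin n) ℝ) ⊗ₖ
        (1 : Matrix (Fin n) (Fin n) ℝ))).mulVec (_root_.vec E) = _root_.vec (α 1 • E) := by
      rw [Matrix.one_kronecker_one, Matrix.smul_mulVec, Matrix.one_mulVec, vec_smul]
    have p2a : ((W ⊗ₖ (1 : Matrix (Fin n) (Fin n) ℝ)) *
        (∑' k : ℕ, α (k + 2) • (((Zᵀ) ^ k) ⊗ₖ (1 : Matrix (Fin n) (Fin n) ℝ))) *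
        (X ⊗ₖ (1 : Matrix (Fin n) (Fin n) ℝ))ᵀ).mulVec (_root_.vec E)
        = ∑' k : ℕ, _root_.vec (α (k + 2) • (E * Atil ^ (k + 1))) := by
      rw [sandwich_mulVec_tsum _ _ _ _ h6]
      refine tsum_congr fun k => ?_
      have hk : (W ⊗ₖ (1 : Matrix (Fin n) (Fin n) ℝ)) *
          (α (k + 2) • (((Zᵀ) ^ k) ⊗ₖ (1 : Matrix (Fin n) (Fin n) ℝ))) *
          (X ⊗ₖ (1 : Matrix (Fin n) (Fin n) ℝ))ᵀ
          = α (k + 2) • (((Atil ^ (k + 1))ᵀ) ⊗ₖ (1 : Matrix (Fin n) (Fin n) ℝ)) := by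
        rw [Matrix.mul_smul, Matrix.smul_mul]
        congr 1
        rw [← Matrix.kroneckerMap_transpose, Matrix.transpose_one,
          ← Matrix.mul_kronecker_mul, ← Matrix.mul_kronecker_mul]
        simp only [Matrix.mul_one]
        rw [hTpow k]
      rw [hk, Matrix.smul_mulVec, kron_mulVec, Matrix.transpose_transpose,
        Matrix.one_mul, vec_smul]
    have p2b : (((1 : Matrix (Fin n) (Fin n) ℝ) ⊗ₖ X) *
        (∑' k : ℕ, α (k + 2) • ((1 : Matrix (Fin n) (Fin n) ℝ) ⊗ₖ (Z ^ k))) *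
        ((1 : Matrix (Fin n) (Fin n) ℝ) ⊗ₖ W)ᵀ).mulVec (_root_.vec E)
        = ∑' k : ℕ, _root_.vec (α (k + 2) • (Atil ^ (k + 1) * E)) := by
      rw [sandwich_mulVec_tsum _ _ _ _ h7]
      refine tsum_congr fun k => ?_
      have hk : ((1 : Matrix (Fin n) (Fin n) ℝ) ⊗ₖ X) *
          (α (k + 2) • ((1 : Matrix (Fin n) (Fin n) ℝ) ⊗ₖ (Z ^ k))) *
          ((1 : Matrix (Fin n) (Fin n) ℝ) ⊗ₖ W)ᵀ
          = α (k + 2) • ((1 : Matrix (Fin n) (Fin n) ℝ) ⊗ₖ (Atil ^ (k + 1))) := by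
        rw [Matrix.mul_smul, Matrix.smul_mul]
        congr 1
        rw [← Matrix.kroneckerMap_transpose, Matrix.transpose_one,
          ← Matrix.mul_kronecker_mul, ← Matrix.mul_kronecker_mul]
        simp only [Matrix.mul_one, Matrix.one_mul]
        rw [hpow k, Matrix.mul_assoc]
      rw [hk, Matrix.smul_mulVec, kron_mulVec, Matrix.transpose_one,
        Matrix.mul_one, vec_smul]
    have p3 : ((W ⊗ₖ X) *
        (∑' k : ℕ, α (k + 3) •
          ∑ t ∈ Finset.range (k + 1), ((Zᵀ) ^ (k - t)) ⊗ₖ (Z ^ t)) *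
        (X ⊗ₖ W)ᵀ).mulVec (_root_.vec E)
        = ∑' k : ℕ, _root_.vec (α (k + 3) •
            ∑ t ∈ Finset.range (k + 1), Atil ^ (t + 1) * E * Atil ^ (k + 1 - t)) := by
      rw [sandwich_mulVec_tsum _ _ _ _ h8]
      refine tsum_congr fun k => ?_
      have hk : (W ⊗ₖ X) *
          (α (k + 3) • ∑ t ∈ Finset.range (k + 1), ((Zᵀ) ^ (k - t)) ⊗ₖ (Z ^ t)) *
          (X ⊗ₖ W)ᵀ
          = α (k + 3) • ∑ t ∈ Finset.range (k + 1),
              (((Atil ^ (k + 1 - t))ᵀ) ⊗ₖ (Atil ^ (t + 1))) := by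
        rw [Matrix.mul_smul, Matrix.smul_mul]
        congr 1
        rw [Matrix.mul_sum, Matrix.sum_mul]
        refine Finset.sum_congr rfl fun t ht => ?_
        have htk : t ≤ k := Nat.lt_succ_iff.1 (Finset.mem_range.1 ht)
        rw [← Matrix.kroneckerMap_transpose,
          ← Matrix.mul_kronecker_mul, ← Matrix.mul_kronecker_mul]
        have h1 : k + 1 - t = (k - t) + 1 := by omega
        rw [h1, hTpow (k - t), hpow t]
      rw [hk, Matrix.smul_mulVec, KFDaux.sum_mulVec, vec_smul, vec_sum]
      congr 1
      refine Finset.sum_congr rfl fun t ht => ?_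
      rw [kron_mulVec, Matrix.transpose_transpose]
    rw [← hK E, hLf E, main_identity α hα Atil E, hΨ₁, hΨ₂, hΨ₃]
    simp only [Matrix.add_mulVec]
    rw [p1, p2a, p2b, p3,
      ← vec_tsum hb, ← vec_tsum hcE, ← vec_tsum hd']
    simp only [← KFDaux.vec_add]
    exact congrArg _root_.vec (by abel)
  -- conclude matrix equality
  have hvec_single : ∀ y : Fin n × Fin n,
      _root_.vec (Matrix.single y.2 y.1 (1 : ℝ)) = Pi.single y 1 := by
    rintro ⟨q, m⟩
    funext p
    obtain ⟨q', m'⟩ := p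
    rw [_root_.vec, Matrix.single, Pi.single_apply]
    by_cases h1 : m = m' <;> by_cases h2 : q = q' <;>
      simp [Matrix.of_apply, h1, h2, Prod.ext_iff, eq_comm]
  ext p y
  have h := congrFun (key (Matrix.single y.2 y.1 1)) p
  rw [hvec_single y] at h
  simpa using h
end
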